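/- Let A be any n×n real matrix and B any m×m real matrix. If x ∈ ℝⁿ and y ∈ ℝᵐ satisfy 1ₙᵀ x = 0 and 1ₘᵀ y = 0, then (A ⋄ B)(x ⊗ y) = 0. Consequently, the dimension of the null space of A ⋄ B is at least (n−1)(m−1). -/

import Mathlib

open Matrix Kronecker

/-- The `k × k` all-ones matrix `J_k`. -/
def onesMat (k : ℕ) : Matrix (Fin k) (Fin k) ℝ := Matrix.of fun _ _ => 1

/-- The additive Kronecker analogue `A ⋄ B = A ⊗ J_m + J_n ⊗ B`. -/
def diamond {n m : ℕ} (A : Matrix (Fin n) (Fin n) ℝ) (B : Matrix (Fin m) (Fin m) ℝ) :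
    Matrix (Fin n × Fin m) (Fin n × Fin m) ℝ :=
  A ⊗ₖ onesMat m + onesMat n ⊗ₖ B

/-- The Kronecker product of two vectors. -/
def vecKron {n m : ℕ} (x : Fin n → ℝ) (y : Fin m → ℝ) : Fin n × Fin m → ℝ :=
  fun p => x p.1 * y p.2

/-!
If `1ᵀx = 0` and `1ᵀy = 0`, both Kronecker terms of `A ⋄ B` kill `x ⊗ y`, because
`(A ⊗ J)(x ⊗ y) = Ax ⊗ (1ᵀy)1` and `(J ⊗ B)(x ⊗ y) = (1ᵀx)1 ⊗ By`. The sum-zero hyperplanes have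
dimension at least `n - 1` and `m - 1`, and Kronecker products of bases of them stay linearly
independent, so they span a subspace of the null space of dimension `(n - 1)(m - 1)`.
-/

theorem Matrix.kronecker_mulVec_mul {K ι κ α β : Type*} [CommSemiring K] [Fintype ι]
    [Fintype κ] (A : Matrix α ι K) (B : Matrix β κ K) (x : ι → K) (y : κ → K) :
    (A ⊗ₖ B) *ᵥ (fun q => x q.1 * y q.2) = fun p => (A *ᵥ x) p.1 * (B *ᵥ y) p.2 := by
  ext p
  simp only [mulVec, dotProduct, kroneckerMap_apply, Fintype.sum_prod_type, Finset.sum_mul_sum]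
  exact Finset.sum_congr rfl fun _ _ => Finset.sum_congr rfl fun _ _ => by ring

theorem onesMat_mulVec {k : ℕ} (x : Fin k → ℝ) : onesMat k *ᵥ x = fun _ => ∑ i, x i := by
  ext
  simp [onesMat, mulVec, dotProduct]

theorem diamond_mulVec_vecKron {n m : ℕ} (A : Matrix (Fin n) (Fin n) ℝ)
    (B : Matrix (Fin m) (Fin m) ℝ) (x : Fin n → ℝ) (y : Fin m → ℝ) :
    diamond A B *ᵥ vecKron x y =
      vecKron (A *ᵥ x) (fun _ => ∑ j, y j) + vecKron (fun _ => ∑ i, x i) (B *ᵥ y) := by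
  unfold diamond vecKron
  rw [add_mulVec, kronecker_mulVec_mul, kronecker_mulVec_mul, onesMat_mulVec, onesMat_mulVec]

theorem diamond_mulVec_vecKron_eq_zero {n m : ℕ} (A : Matrix (Fin n) (Fin n) ℝ)
    (B : Matrix (Fin m) (Fin m) ℝ) {x : Fin n → ℝ} {y : Fin m → ℝ} (hx : ∑ i, x i = 0)
    (hy : ∑ j, y j = 0) : diamond A B *ᵥ vecKron x y = 0 := by
  ext
  simp [diamond_mulVec_vecKron, vecKron, hx, hy]

theorem LinearIndependent.mul_fst_snd {K ι κ α β : Type*} [CommRing K] [Fintype α] [Fintype β]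
    {u : α → ι → K} {v : β → κ → K} (hu : LinearIndependent K u) (hv : LinearIndependent K v) :
    LinearIndependent K fun c : α × β => fun q : ι × κ => u c.1 q.1 * v c.2 q.2 := by
  rw [Fintype.linearIndependent_iff] at hu hv ⊢
  intro g hg ⟨a, b⟩
  -- Read at a fixed row `i`, the relation is one among the `v b`.
  have hcoeff : ∀ i b, ∑ a, g (a, b) * u a i = 0 := by
    intro i
    refine hv _ (funext fun j => ?_)
    have := congrFun hg (i, j)
    simp only [Finset.sum_apply, Pi.smul_apply, smul_eq_mul, Fintype.sum_prod_type,
      Pi.zero_apply] at this ⊢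
    rw [← this, Finset.sum_comm]
    exact Finset.sum_congr rfl fun _ _ => by
      rw [Finset.sum_mul]; exact Finset.sum_congr rfl fun _ _ => by ring
  exact hu (fun a => g (a, b)) (funext fun i => by simpa using hcoeff i b) a

theorem finrank_mul_finrank_le_of_mul_mem {K ι κ : Type*} [Field K] [Fintype ι] [Fintype κ]
    {U : Submodule K (ι → K)} {V : Submodule K (κ → K)} {W : Submodule K (ι × κ → K)}
    (h : ∀ x ∈ U, ∀ y ∈ V, (fun q => x q.1 * y q.2) ∈ W) :
    Module.finrank K U * Module.finrank K V ≤ Module.finrank K W := by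
  let bU := Module.finBasis K U
  let bV := Module.finBasis K V
  let f (c : Fin _ × Fin _) : W := ⟨_, h _ (bU c.1).2 _ (bV c.2).2⟩
  have hUV := (bU.linearIndependent.map' U.subtype U.ker_subtype).mul_fst_snd
    (bV.linearIndependent.map' V.subtype V.ker_subtype)
  have hf : LinearIndependent K f := .of_comp W.subtype hUV
  simpa using hf.fintype_card_le_finrank

theorem LinearMap.finrank_sub_one_le_finrank_ker {K V : Type*} [Field K] [AddCommGroup V]
    [Module K V] [FiniteDimensional K V] (f : V →ₗ[K] K) :
    Module.finrank K V - 1 ≤ Module.finrank K (LinearMap.ker f) := by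
  have hrange : Module.finrank K (LinearMap.range f) ≤ 1 :=
    (Submodule.finrank_le _).trans (Module.finrank_self K).le
  have := f.finrank_range_add_finrank_ker
  omega

section SumZero

variable (K ι : Type*) [Field K] [Fintype ι]

def sumZero : Submodule K (ι → K) :=
  LinearMap.ker (Fintype.linearCombination K fun _ : ι => (1 : K))

variable {K ι}

theorem mem_sumZero {x : ι → K} : x ∈ sumZero K ι ↔ ∑ i, x i = 0 := by
  simp [sumZero, Fintype.linearCombination_apply]

theorem card_sub_one_le_finrank_sumZero :
    Fintype.card ι - 1 ≤ Module.finrank K (sumZero K ι) := by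
  rw [← Module.finrank_fintype_fun_eq_card K]
  exact LinearMap.finrank_sub_one_le_finrank_ker _

end SumZero

/-- For any square real matrices `A`, `B`, if the entries of `x` and of `y`
each sum to zero then `(A ⋄ B)(x ⊗ y) = 0`; consequently the null space of `A ⋄ B` has
dimension at least `(n−1)(m−1)`. -/
theorem diamond_nullity {n m : ℕ}
    (A : Matrix (Fin n) (Fin n) ℝ) (B : Matrix (Fin m) (Fin m) ℝ) :
    (∀ (x : Fin n → ℝ) (y : Fin m → ℝ), ∑ i, x i = 0 → ∑ j, y j = 0 →
        (diamond A B).mulVec (vecKron x y) = 0) ∧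
      (n - 1) * (m - 1) ≤ Module.finrank ℝ (LinearMap.ker (diamond A B).mulVecLin) := by
  refine ⟨fun x y => diamond_mulVec_vecKron_eq_zero A B, ?_⟩
  calc (n - 1) * (m - 1)
      ≤ Module.finrank ℝ (sumZero ℝ (Fin n)) * Module.finrank ℝ (sumZero ℝ (Fin m)) := by
        gcongr
        · simpa using card_sub_one_le_finrank_sumZero (K := ℝ) (ι := Fin n)
        · simpa using card_sub_one_le_finrank_sumZero (K := ℝ) (ι := Fin m)
    _ ≤ _ := finrank_mul_finrank_le_of_mul_mem fun x hx y hy =>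
        diamond_mulVec_vecKron_eq_zero A B (mem_sumZero.1 hx) (mem_sumZero.1 hy)
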